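/- Let P be a Markov kernel on a finite metric space (X,d) and suppose there exists κ₀ > 0 such that for all x ≠ y, 1 − W₁(P(x,·), P(y,·))/d(x,y) ≥ κ₀. Then for all probability measures μ, ν on X, W₁(μP, νP) ≤ (1 − κ₀)·W₁(μ, ν). -/
import Mathlib


open Finset

def IsPMF {X : Type*} [Fintype X] (p : X → ℝ) : Prop :=
  (∀ z, 0 ≤ p z) ∧ ∑ z, p z = 1

def IsCoupling {X : Type*} [Fintype X] (γ : X → X → ℝ) (μ ν : X → ℝ) : Prop :=
  (∀ x y, 0 ≤ γ x y) ∧ (∀ x, ∑ y, γ x y = μ x) ∧ (∀ y, ∑ x, γ x y = ν y)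

noncomputable def W1 {X : Type*} [Fintype X] [MetricSpace X] (μ ν : X → ℝ) : ℝ :=
  sInf {c | ∃ γ, IsCoupling γ μ ν ∧ c = ∑ x, ∑ y, γ x y * dist x y}

def IsKernel {X : Type*} [Fintype X] (P : X → X → ℝ) : Prop := ∀ x, IsPMF (P x)

noncomputable def push {X : Type*} [Fintype X] (μ : X → ℝ) (P : X → X → ℝ) : X → ℝ :=
  fun z => ∑ x, μ x * P x z

section aux

variable {X : Type*} [Fintype X] [MetricSpace X]

lemma cost_nonneg {γ : X → X → ℝ} (h : ∀ x y, 0 ≤ γ x y) :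
    0 ≤ ∑ x, ∑ y, γ x y * dist x y :=
  Finset.sum_nonneg fun x _ => Finset.sum_nonneg fun y _ => mul_nonneg (h x y) dist_nonneg

lemma prod_coupling {μ ν : X → ℝ} (hμ : IsPMF μ) (hν : IsPMF ν) :
    IsCoupling (fun x y => μ x * ν y) μ ν := by
  refine ⟨fun x y => mul_nonneg (hμ.1 x) (hν.1 y), fun x => ?_, fun y => ?_⟩
  · rw [← Finset.mul_sum, hν.2, mul_one]
  · rw [← Finset.sum_mul, hμ.2, one_mul]

lemma costSet_nonempty {μ ν : X → ℝ} (hμ : IsPMF μ) (hν : IsPMF ν) :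
    {c | ∃ γ, IsCoupling γ μ ν ∧ c = ∑ x, ∑ y, γ x y * dist x y}.Nonempty :=
  ⟨_, fun x y => μ x * ν y, prod_coupling hμ hν, rfl⟩

lemma costSet_bddBelow (μ ν : X → ℝ) :
    BddBelow {c | ∃ γ, IsCoupling γ μ ν ∧ c = ∑ x, ∑ y, γ x y * dist x y} := by
  refine ⟨0, fun c hc => ?_⟩
  obtain ⟨γ, hγ, rfl⟩ := hc
  exact cost_nonneg hγ.1

lemma W1_le {μ ν : X → ℝ} {γ : X → X → ℝ} (hγ : IsCoupling γ μ ν) :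
    W1 μ ν ≤ ∑ x, ∑ y, γ x y * dist x y :=
  csInf_le (costSet_bddBelow μ ν) ⟨γ, hγ, rfl⟩

lemma W1_nonneg {μ ν : X → ℝ} (hμ : IsPMF μ) (hν : IsPMF ν) : 0 ≤ W1 μ ν := by
  refine le_csInf (costSet_nonempty hμ hν) fun c hc => ?_
  obtain ⟨γ, hγ, rfl⟩ := hc
  exact cost_nonneg hγ.1

lemma exists_near_coupling {μ ν : X → ℝ} (hμ : IsPMF μ) (hν : IsPMF ν) {ε : ℝ} (hε : 0 < ε) :
    ∃ γ, IsCoupling γ μ ν ∧ ∑ x, ∑ y, γ x y * dist x y < W1 μ ν + ε := by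
  obtain ⟨c, hc, hlt⟩ := Real.lt_sInf_add_pos (costSet_nonempty hμ hν) hε
  obtain ⟨γ, hγ, rfl⟩ := hc
  exact ⟨γ, hγ, hlt⟩

lemma diag_coupling [DecidableEq X] (ρ : X → ℝ) (h : ∀ z, 0 ≤ ρ z) :
    IsCoupling (fun z w => if z = w then ρ z else 0) ρ ρ := by
  refine ⟨fun z w => by by_cases hzw : z = w <;> simp [hzw, h w], fun z => ?_, fun w => ?_⟩
  · simp [Finset.sum_ite_eq]
  · simp [Finset.sum_ite_eq']

lemma diag_cost [DecidableEq X] (ρ : X → ℝ) :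
    ∑ z, ∑ w, (if z = w then ρ z else 0) * dist z w = 0 := by
  classical
  refine Finset.sum_eq_zero fun z _ => Finset.sum_eq_zero fun w _ => ?_
  by_cases h : z = w
  · subst h; simp
  · simp [h]

lemma swap4 {α : Type*} [Fintype α] (f : α → α → α → α → ℝ) :
    ∑ z, ∑ w, ∑ x, ∑ y, f x y z w = ∑ x, ∑ y, ∑ z, ∑ w, f x y z w :=
  calc ∑ z, ∑ w, ∑ x, ∑ y, f x y z w
      = ∑ z, ∑ x, ∑ w, ∑ y, f x y z w :=
        Finset.sum_congr rfl fun z _ => Finset.sum_comm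
    _ = ∑ x, ∑ z, ∑ w, ∑ y, f x y z w := Finset.sum_comm
    _ = ∑ x, ∑ z, ∑ y, ∑ w, f x y z w :=
        Finset.sum_congr rfl fun x _ => Finset.sum_congr rfl fun z _ => Finset.sum_comm
    _ = ∑ x, ∑ y, ∑ z, ∑ w, f x y z w :=
        Finset.sum_congr rfl fun x _ => Finset.sum_comm

end aux

theorem stmt0 {X : Type*} [Fintype X] [MetricSpace X]
    (P : X → X → ℝ) (hP : IsKernel P) (κ₀ : ℝ) (hκ : 0 < κ₀)
    (hcurv : ∀ x y : X, x ≠ y → κ₀ ≤ 1 - W1 (P x) (P y) / dist x y) :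
    ∀ μ ν : X → ℝ, IsPMF μ → IsPMF ν →
      W1 (push μ P) (push ν P) ≤ (1 - κ₀) * W1 μ ν := by
  classical
  intro μ ν hμ hν
  have hpushμ : IsPMF (push μ P) := by
    constructor
    · intro z; exact Finset.sum_nonneg fun x _ => mul_nonneg (hμ.1 x) ((hP x).1 z)
    · simp only [push]
      rw [Finset.sum_comm]
      calc ∑ x, ∑ z, μ x * P x z = ∑ x, μ x * ∑ z, P x z := by
            simp [Finset.mul_sum]
        _ = 1 := by simp only [(hP _).2, mul_one]; exact hμ.2
  have hpushν : IsPMF (push ν P) := by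
    constructor
    · intro z; exact Finset.sum_nonneg fun x _ => mul_nonneg (hν.1 x) ((hP x).1 z)
    · simp only [push]
      rw [Finset.sum_comm]
      calc ∑ x, ∑ z, ν x * P x z = ∑ x, ν x * ∑ z, P x z := by
            simp [Finset.mul_sum]
        _ = 1 := by simp only [(hP _).2, mul_one]; exact hν.2
  by_cases hss : ∀ x y : X, x = y
  · -- subsingleton case
    have hμν : μ = ν := by
      funext z
      have h1 : ∑ w, μ w = 1 := hμ.2
      have h2 : ∑ w, ν w = 1 := hν.2
      have e1 : ∀ w : X, w = z := fun w => hss w z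
      have h1' : ∑ w, μ w = (Fintype.card X : ℝ) * μ z :=
        calc ∑ w, μ w = ∑ _w : X, μ z := Finset.sum_congr rfl fun w _ => by rw [e1 w]
          _ = (Fintype.card X : ℝ) * μ z := by
              rw [Finset.sum_const, Finset.card_univ, nsmul_eq_mul]
      have h2' : ∑ w, ν w = (Fintype.card X : ℝ) * ν z :=
        calc ∑ w, ν w = ∑ _w : X, ν z := Finset.sum_congr rfl fun w _ => by rw [e1 w]
          _ = (Fintype.card X : ℝ) * ν z := by
              rw [Finset.sum_const, Finset.card_univ, nsmul_eq_mul]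
      haveI : Nonempty X := ⟨z⟩
      have hcard : (Fintype.card X : ℝ) ≠ 0 := Nat.cast_ne_zero.mpr Fintype.card_ne_zero
      have e2 : (Fintype.card X : ℝ) * μ z = (Fintype.card X : ℝ) * ν z := by
        rw [← h1', ← h2', h1, h2]
      exact mul_left_cancel₀ hcard e2
    subst hμν
    have hL : W1 (push μ P) (push μ P) ≤ 0 := by
      have := W1_le (diag_coupling (push μ P) hpushμ.1)
      rwa [diag_cost] at this
    have hR : W1 μ μ = 0 := by
      have h1 : W1 μ μ ≤ 0 := by
        have := W1_le (diag_coupling μ hμ.1)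
        rwa [diag_cost] at this
      exact le_antisymm h1 (W1_nonneg hμ hμ)
    rw [hR, mul_zero]
    exact hL
  · push_neg at hss
    obtain ⟨x₀, y₀, hxy₀⟩ := hss
    -- 1 - κ₀ ≥ 0
    have hκ1 : κ₀ ≤ 1 := by
      have h := hcurv x₀ y₀ hxy₀
      have hd : 0 < dist x₀ y₀ := dist_pos.mpr hxy₀
      have hW : 0 ≤ W1 (P x₀) (P y₀) := W1_nonneg (hP x₀) (hP y₀)
      nlinarith [div_nonneg hW hd.le]
    have h1κ : 0 ≤ 1 - κ₀ := by linarith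
    -- key pointwise bound
    have hkey : ∀ x y : X, W1 (P x) (P y) ≤ (1 - κ₀) * dist x y := by
      intro x y
      by_cases h : x = y
      · subst h
        simp only [dist_self, mul_zero]
        have := W1_le (diag_coupling (P x) (hP x).1)
        rwa [diag_cost] at this
      · have hc := hcurv x y h
        have hd : 0 < dist x y := dist_pos.mpr h
        have hdiv : W1 (P x) (P y) / dist x y ≤ 1 - κ₀ := by linarith
        exact (div_le_iff₀ hd).mp hdiv
    -- epsilon argument
    refine le_of_forall_pos_le_add fun ε hε => ?_
    have h2κ : 0 < 2 - κ₀ := by linarith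
    set δ : ℝ := ε / (2 - κ₀) with hδdef
    have hδ : 0 < δ := div_pos hε h2κ
    obtain ⟨γ, hγ, hγcost⟩ := exists_near_coupling hμ hν hδ
    -- choose near-optimal couplings for each pair
    have hchoice : ∀ x y : X, ∃ η : X → X → ℝ, IsCoupling η (P x) (P y) ∧
        ∑ z, ∑ w, η z w * dist z w < (1 - κ₀) * dist x y + δ := by
      intro x y
      obtain ⟨η, hη, hc⟩ := exists_near_coupling (hP x) (hP y) hδ
      exact ⟨η, hη, lt_of_lt_of_le hc (by linarith [hkey x y])⟩
    choose Q hQ hQcost using hchoice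
    set Γ : X → X → ℝ := fun z w => ∑ x, ∑ y, γ x y * Q x y z w with hΓdef
    have hγmass : ∑ x, ∑ y, γ x y = 1 := by
      rw [Finset.sum_congr rfl fun x _ => hγ.2.1 x]
      exact hμ.2
    have hΓcoupling : IsCoupling Γ (push μ P) (push ν P) := by
      refine ⟨fun z w => Finset.sum_nonneg fun x _ => Finset.sum_nonneg fun y _ =>
        mul_nonneg (hγ.1 x y) ((hQ x y).1 z w), fun z => ?_, fun w => ?_⟩
      · rw [Finset.sum_comm]
        calc ∑ x, ∑ w, ∑ y, γ x y * Q x y z w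
            = ∑ x, ∑ y, ∑ w, γ x y * Q x y z w := by
              exact Finset.sum_congr rfl fun x _ => Finset.sum_comm
          _ = ∑ x, ∑ y, γ x y * P x z := by
              refine Finset.sum_congr rfl fun x _ => Finset.sum_congr rfl fun y _ => ?_
              rw [← Finset.mul_sum, (hQ x y).2.1 z]
          _ = ∑ x, μ x * P x z := by
              refine Finset.sum_congr rfl fun x _ => ?_
              rw [← Finset.sum_mul, hγ.2.1 x]
          _ = push μ P z := rfl
      · rw [Finset.sum_comm]
        calc ∑ x, ∑ z, ∑ y, γ x y * Q x y z w
            = ∑ x, ∑ y, ∑ z, γ x y * Q x y z w := by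
              exact Finset.sum_congr rfl fun x _ => Finset.sum_comm
          _ = ∑ y, ∑ x, γ x y * P y w := by
              rw [Finset.sum_comm]
              refine Finset.sum_congr rfl fun y _ => Finset.sum_congr rfl fun x _ => ?_
              rw [← Finset.mul_sum, (hQ x y).2.2 w]
          _ = ∑ y, ν y * P y w := by
              refine Finset.sum_congr rfl fun y _ => ?_
              rw [← Finset.sum_mul, hγ.2.2 y]
          _ = push ν P w := rfl
    have hΓcost : ∑ z, ∑ w, Γ z w * dist z w
        = ∑ x, ∑ y, γ x y * ∑ z, ∑ w, Q x y z w * dist z w := by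
      calc ∑ z, ∑ w, Γ z w * dist z w
          = ∑ z, ∑ w, ∑ x, ∑ y, γ x y * (Q x y z w * dist z w) := by
            refine Finset.sum_congr rfl fun z _ => Finset.sum_congr rfl fun w _ => ?_
            rw [Finset.sum_mul]
            refine Finset.sum_congr rfl fun x _ => ?_
            rw [Finset.sum_mul]
            exact Finset.sum_congr rfl fun y _ => mul_assoc _ _ _
        _ = ∑ x, ∑ y, ∑ z, ∑ w, γ x y * (Q x y z w * dist z w) := swap4 _
        _ = ∑ x, ∑ y, γ x y * ∑ z, ∑ w, Q x y z w * dist z w := by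
            refine Finset.sum_congr rfl fun x _ => Finset.sum_congr rfl fun y _ => ?_
            rw [Finset.mul_sum]
            exact Finset.sum_congr rfl fun z _ => (Finset.mul_sum _ _ _).symm
    have step1 : W1 (push μ P) (push ν P) ≤ ∑ z, ∑ w, Γ z w * dist z w :=
      W1_le hΓcoupling
    have step2 : ∑ z, ∑ w, Γ z w * dist z w ≤ (1 - κ₀) * (∑ x, ∑ y, γ x y * dist x y) + δ := by
      rw [hΓcost]
      have : ∑ x, ∑ y, γ x y * ∑ z, ∑ w, Q x y z w * dist z w
          ≤ ∑ x, ∑ y, γ x y * ((1 - κ₀) * dist x y + δ) := by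
        refine Finset.sum_le_sum fun x _ => Finset.sum_le_sum fun y _ =>
          mul_le_mul_of_nonneg_left (hQcost x y).le (hγ.1 x y)
      refine this.trans (le_of_eq ?_)
      have expand : ∑ x, ∑ y, γ x y * ((1 - κ₀) * dist x y + δ)
          = (1 - κ₀) * (∑ x, ∑ y, γ x y * dist x y) + δ * (∑ x, ∑ y, γ x y) := by
        rw [Finset.mul_sum, Finset.mul_sum]
        rw [← Finset.sum_add_distrib]
        refine Finset.sum_congr rfl fun x _ => ?_
        rw [Finset.mul_sum, Finset.mul_sum, ← Finset.sum_add_distrib]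
        exact Finset.sum_congr rfl fun y _ => by ring
      rw [expand, hγmass, mul_one]
    have step3 : (1 - κ₀) * (∑ x, ∑ y, γ x y * dist x y) ≤ (1 - κ₀) * (W1 μ ν + δ) :=
      mul_le_mul_of_nonneg_left hγcost.le h1κ
    have : W1 (push μ P) (push ν P) ≤ (1 - κ₀) * W1 μ ν + (2 - κ₀) * δ := by
      calc W1 (push μ P) (push ν P) ≤ (1 - κ₀) * (W1 μ ν + δ) + δ := by linarith
        _ = (1 - κ₀) * W1 μ ν + (2 - κ₀) * δ := by ring
    have hδε : (2 - κ₀) * δ = ε := by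
      rw [hδdef]; field_simp
    linarith
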